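/- (Proposition E) For the unique value function f of the 3PG, f(101011 | {2,3}) = 9 and f(101011 | {1,2}) = 8; i.e., in the states where exactly the relations '2 beats 1' and '3 beats 1' are missing, the value is 9 when the ring is {2,3} and 8 when the ring is {1,2}. -/
import Mathlib


/-- A state of the three-player game (3PG): `beats i j` records whether the event
"player `i` has beaten player `j`" has occurred, and `ring` is the (unordered)
pair of the two players currently in the ring. -/
structure PGState where
  beats : Fin 3 → Fin 3 → Bool
  ring : Finset (Fin 3)
  card_ring : ring.card = 2

/-- A state is terminal if all six win-lose relations have occurred. -/
def PGState.Terminal (S : PGState) : Prop :=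
  ∀ i j : Fin 3, i ≠ j → S.beats i j = true

/-- The successor state in which player `w` beats player `l` in the current round
and the third player `t` enters the ring. -/
def PGState.succ (S : PGState) (w l t : Fin 3) (hwt : w ≠ t) : PGState :=
  ⟨fun i j => if i = w ∧ j = l then true else S.beats i j, {w, t}, Finset.card_pair hwt⟩

/-- `f` is a value function for the 3PG: it vanishes on terminal states and
satisfies the reduction rule `f S = 1 + (f S₁ + f S₂)/2` on non-terminal states,
where `S₁` and `S₂` are the two successors of `S`. -/
def IsValueFn (f : PGState → ℝ) : Prop :=
  (∀ S : PGState, S.Terminal → f S = 0) ∧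
  ∀ (S : PGState) (t₁ t₂ t₃ : Fin 3) (_ : t₁ ≠ t₂) (h₁₃ : t₁ ≠ t₃) (h₂₃ : t₂ ≠ t₃),
    S.ring = {t₁, t₂} → ¬ S.Terminal →
    f S = 1 + (f (S.succ t₁ t₂ t₃ h₁₃) + f (S.succ t₂ t₁ t₃ h₂₃)) / 2

/-- The win-lose record `(b₁b₂b₃b₄b₅b₆)`, where the six bits indicate whether the
relations "1 beats 2", "2 beats 1", "1 beats 3", "3 beats 1", "2 beats 3",
"3 beats 2" have occurred (players 1, 2, 3 are `0, 1, 2 : Fin 3`). -/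
def mkBeats (b₁ b₂ b₃ b₄ b₅ b₆ : Bool) : Fin 3 → Fin 3 → Bool := fun i j =>
  if i = 0 ∧ j = 1 then b₁
  else if i = 1 ∧ j = 0 then b₂
  else if i = 0 ∧ j = 2 then b₃
  else if i = 2 ∧ j = 0 then b₄
  else if i = 1 ∧ j = 2 then b₅
  else if i = 2 ∧ j = 1 then b₆
  else false

/-- The state `(b₁b₂b₃b₄b₅b₆ | {t₁, t₂})`. -/
def mkState (b₁ b₂ b₃ b₄ b₅ b₆ : Bool) (t₁ t₂ : Fin 3) (h : t₁ ≠ t₂ := by decide) :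
    PGState :=
  ⟨mkBeats b₁ b₂ b₃ b₄ b₅ b₆, {t₁, t₂}, Finset.card_pair h⟩


theorem PGState.ext' {S T : PGState} (hb : S.beats = T.beats) (hr : S.ring = T.ring) :
    S = T := by
  cases S; cases T; simp_all

/-- Proposition E: `f(101011|{2,3}) = 9` and `f(101011|{1,2}) = 8`. -/
theorem threePG_propE (f : PGState → ℝ) (hf : IsValueFn f) :
    f (mkState true false true false true true 1 2) = 9 ∧
    f (mkState true false true false true true 0 1) = 8 := by
  obtain ⟨h0, h⟩ := hf
  -- terminal states
  have hT1 : f ((mkState true true true false true true 0 2).succ 2 0 1 (by decide)) = 0 := by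
    apply h0; intro i j hij; fin_cases i <;> fin_cases j <;> simp_all [PGState.succ, mkState, mkBeats]
  have hT2 : f ((mkState true false true true true true 0 1).succ 1 0 2 (by decide)) = 0 := by
    apply h0; intro i j hij; fin_cases i <;> fin_cases j <;> simp_all [PGState.succ, mkState, mkBeats]
  -- successor identifications
  have eAB : (mkState true false true false true true 1 2).succ 1 2 0 (by decide)
      = mkState true false true false true true 0 1 :=
    PGState.ext' (by funext i j; fin_cases i <;> fin_cases j <;> rfl) (by decide)
  have eAC : (mkState true false true false true true 1 2).succ 2 1 0 (by decide)
      = mkState true false true false true true 0 2 :=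
    PGState.ext' (by funext i j; fin_cases i <;> fin_cases j <;> rfl) (by decide)
  have eBC : (mkState true false true false true true 0 1).succ 0 1 2 (by decide)
      = mkState true false true false true true 0 2 :=
    PGState.ext' (by funext i j; fin_cases i <;> fin_cases j <;> rfl) (by decide)
  have eBD : (mkState true false true false true true 0 1).succ 1 0 2 (by decide)
      = mkState true true true false true true 1 2 :=
    PGState.ext' (by funext i j; fin_cases i <;> fin_cases j <;> rfl) (by decide)
  have eCB : (mkState true false true false true true 0 2).succ 0 2 1 (by decide)
      = mkState true false true false true true 0 1 :=
    PGState.ext' (by funext i j; fin_cases i <;> fin_cases j <;> rfl) (by decide)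
  have eCE : (mkState true false true false true true 0 2).succ 2 0 1 (by decide)
      = mkState true false true true true true 1 2 :=
    PGState.ext' (by funext i j; fin_cases i <;> fin_cases j <;> rfl) (by decide)
  have eD1 : (mkState true true true false true true 1 2).succ 1 2 0 (by decide)
      = mkState true true true false true true 0 1 :=
    PGState.ext' (by funext i j; fin_cases i <;> fin_cases j <;> rfl) (by decide)
  have eD2 : (mkState true true true false true true 1 2).succ 2 1 0 (by decide)
      = mkState true true true false true true 0 2 :=
    PGState.ext' (by funext i j; fin_cases i <;> fin_cases j <;> rfl) (by decide)
  have eD3 : (mkState true true true false true true 0 1).succ 0 1 2 (by decide)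
      = mkState true true true false true true 0 2 :=
    PGState.ext' (by funext i j; fin_cases i <;> fin_cases j <;> rfl) (by decide)
  have eD4 : (mkState true true true false true true 0 1).succ 1 0 2 (by decide)
      = mkState true true true false true true 1 2 :=
    PGState.ext' (by funext i j; fin_cases i <;> fin_cases j <;> rfl) (by decide)
  have eD5 : (mkState true true true false true true 0 2).succ 0 2 1 (by decide)
      = mkState true true true false true true 0 1 :=
    PGState.ext' (by funext i j; fin_cases i <;> fin_cases j <;> rfl) (by decide)
  have eE1 : (mkState true false true true true true 1 2).succ 1 2 0 (by decide)
      = mkState true false true true true true 0 1 :=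
    PGState.ext' (by funext i j; fin_cases i <;> fin_cases j <;> rfl) (by decide)
  have eE2 : (mkState true false true true true true 1 2).succ 2 1 0 (by decide)
      = mkState true false true true true true 0 2 :=
    PGState.ext' (by funext i j; fin_cases i <;> fin_cases j <;> rfl) (by decide)
  have eE3 : (mkState true false true true true true 0 1).succ 0 1 2 (by decide)
      = mkState true false true true true true 0 2 :=
    PGState.ext' (by funext i j; fin_cases i <;> fin_cases j <;> rfl) (by decide)
  have eE5 : (mkState true false true true true true 0 2).succ 0 2 1 (by decide)
      = mkState true false true true true true 0 1 :=
    PGState.ext' (by funext i j; fin_cases i <;> fin_cases j <;> rfl) (by decide)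
  have eE6 : (mkState true false true true true true 0 2).succ 2 0 1 (by decide)
      = mkState true false true true true true 1 2 :=
    PGState.ext' (by funext i j; fin_cases i <;> fin_cases j <;> rfl) (by decide)
  -- non-terminality
  have nt : ∀ b2 b4 : Bool, ¬ (b2 && b4 = true) → ∀ t₁ t₂ : Fin 3, ∀ h : t₁ ≠ t₂,
      ¬ (mkState true b2 true b4 true true t₁ t₂ h).Terminal := by
    intro b2 b4 hb t₁ t₂ ht hT
    have h1 := hT 1 0 (by decide)
    have h2 := hT 2 0 (by decide)
    simp [mkState, mkBeats] at h1 h2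
    simp [h1, h2] at hb
  -- equations
  have hA := h (mkState true false true false true true 1 2) 1 2 0 (by decide) (by decide)
    (by decide) rfl (nt false false (by decide) 1 2 (by decide))
  have hB := h (mkState true false true false true true 0 1) 0 1 2 (by decide) (by decide)
    (by decide) rfl (nt false false (by decide) 0 1 (by decide))
  have hC := h (mkState true false true false true true 0 2) 0 2 1 (by decide) (by decide)
    (by decide) rfl (nt false false (by decide) 0 2 (by decide))
  have hD := h (mkState true true true false true true 1 2) 1 2 0 (by decide) (by decide)
    (by decide) rfl (nt true false (by decide) 1 2 (by decide))
  have hD' := h (mkState true true true false true true 0 1) 0 1 2 (by decide) (by decide)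
    (by decide) rfl (nt true false (by decide) 0 1 (by decide))
  have hD'' := h (mkState true true true false true true 0 2) 0 2 1 (by decide) (by decide)
    (by decide) rfl (nt true false (by decide) 0 2 (by decide))
  have hE := h (mkState true false true true true true 1 2) 1 2 0 (by decide) (by decide)
    (by decide) rfl (nt false true (by decide) 1 2 (by decide))
  have hE' := h (mkState true false true true true true 0 1) 0 1 2 (by decide) (by decide)
    (by decide) rfl (nt false true (by decide) 0 1 (by decide))
  have hE'' := h (mkState true false true true true true 0 2) 0 2 1 (by decide) (by decide)
    (by decide) rfl (nt false true (by decide) 0 2 (by decide))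
  rw [eAB, eAC] at hA
  rw [eBC, eBD] at hB
  rw [eCB, eCE] at hC
  rw [eD1, eD2] at hD
  rw [eD3, eD4] at hD'
  rw [eD5, hT1] at hD''
  rw [eE1, eE2] at hE
  rw [eE3, hT2] at hE'
  rw [eE5, eE6] at hE''
  constructor <;> linarith
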